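/- arXiv:2601.10777 — 5 statements merged into one kernel-verified Lean document; each statement's English description precedes it below -/
import Mathlib

section
/- For all z, t ∈ ℂ with t ≠ 0, the doubly infinite series ∑_{n=−∞}^{∞} J_n(z) tⁿ converges and equals exp((z/2)(t − 1/t)). -/
/-!
Multiply the exponential series of `exp (z t / 2)` and `exp (-z / (2 t))`. The pairs `(m, k)` of
exponents contributing to `tⁿ` are those with `m - k = n`; indexed by `min m k` they give exactly
the series of `J_n(z)` when `n ≥ 0`. The case `n < 0` reduces to `-n > 0` through the symmetry
`t ↦ -t⁻¹`, which swaps the two exponentials.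
-/

/-- Bessel function of the first kind of nonnegative integer order `n`:
`J_n(z) = ∑_{k=0}^∞ (-1)^k (z/2)^(2k+n) / (k! (k+n)!)`. -/
noncomputable def besselJNat (n : ℕ) (z : ℂ) : ℂ :=
  ∑' k : ℕ, (-1) ^ k * (z / 2) ^ (2 * k + n) / (k.factorial * (k + n).factorial)

/-- Bessel function of the first kind of integer order, with
`J_{-n}(z) = (-1)^n J_n(z)` for `n ≥ 0`. -/
noncomputable def besselJ (n : ℤ) (z : ℂ) : ℂ :=
  if 0 ≤ n then besselJNat n.toNat z else (-1) ^ (-n).toNat * besselJNat (-n).toNat z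

open Nat

lemma Complex.hasSum_pow_div_factorial (w : ℂ) :
    HasSum (fun m : ℕ => w ^ m / (m ! : ℂ)) (Complex.exp w) := by
  rw [Complex.exp_eq_exp_ℂ]
  exact NormedSpace.expSeries_div_hasSum_exp w

lemma Complex.summable_norm_pow_div_factorial (w : ℂ) :
    Summable fun m : ℕ => ‖w ^ m / (m ! : ℂ)‖ := by
  simpa only [norm_div, norm_pow, Complex.norm_natCast] using
    Real.summable_pow_div_factorial ‖w‖

lemma Complex.hasSum_exp_mul_exp (a b : ℂ) :
    HasSum (fun p : ℕ × ℕ => a ^ p.1 / (p.1 ! : ℂ) * (b ^ p.2 / (p.2 ! : ℂ)))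
      (Complex.exp a * Complex.exp b) :=
  (hasSum_pow_div_factorial a).mul (f := fun m => a ^ m / (m ! : ℂ))
    (g := fun m => b ^ m / (m ! : ℂ)) (hasSum_pow_div_factorial b)
    (summable_mul_of_summable_norm (f := fun m => a ^ m / (m ! : ℂ))
      (g := fun m => b ^ m / (m ! : ℂ)) (summable_norm_pow_div_factorial a)
      (summable_norm_pow_div_factorial b))

lemma summable_besselJNat_series (n : ℕ) (z : ℂ) :
    Summable fun k : ℕ => (-1 : ℂ) ^ k * (z / 2) ^ (2 * k + n) / (k ! * (k + n) !) := by
  refine .of_norm_bounded ((Real.summable_pow_div_factorial (‖z / 2‖ ^ 2)).mul_left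
    (‖z / 2‖ ^ n)) fun k => ?_
  have hfac : (1 : ℝ) ≤ (k + n) ! := mod_cast (k + n).factorial_pos
  calc ‖(-1 : ℂ) ^ k * (z / 2) ^ (2 * k + n) / (k ! * (k + n) !)‖
      = ‖z / 2‖ ^ (2 * k + n) / (k ! * (k + n) !) := by simp
    _ ≤ ‖z / 2‖ ^ (2 * k + n) / (k ! * 1) := by gcongr
    _ = ‖z / 2‖ ^ n * ((‖z / 2‖ ^ 2) ^ k / k !) := by ring

lemma hasSum_besselJNat (n : ℕ) (z : ℂ) :
    HasSum (fun k : ℕ => (-1 : ℂ) ^ k * (z / 2) ^ (2 * k + n) / (k ! * (k + n) !))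
      (besselJNat n z) :=
  (summable_besselJNat_series n z).hasSum

lemma besselJ_natCast (n : ℕ) (z : ℂ) : besselJ n z = besselJNat n z := by
  simp [besselJ]

lemma besselJ_neg_natCast (n : ℕ) (z : ℂ) : besselJ (-n) z = (-1) ^ n * besselJNat n z := by
  rcases n.eq_zero_or_pos with rfl | hn
  · simp [besselJ]
  · simp [besselJ, hn.ne']

def subMinEquiv : ℕ × ℕ ≃ ℤ × ℕ where
  toFun q := ((q.1 : ℤ) - q.2, min q.1 q.2)
  invFun p := (p.2 + p.1.toNat, p.2 + (-p.1).toNat)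
  left_inv q := by simp only [Prod.ext_iff]; omega
  right_inv p := by simp only [Prod.ext_iff]; omega

@[simp] lemma subMinEquiv_symm_natCast (n j : ℕ) : subMinEquiv.symm (n, j) = (j + n, j) := by
  simp [subMinEquiv]

@[simp] lemma subMinEquiv_symm_neg_natCast (n j : ℕ) :
    subMinEquiv.symm (-n, j) = (j, j + n) := by
  simp [subMinEquiv]

lemma hasSum_besselJNat_mul_pow (n : ℕ) (z : ℂ) {t : ℂ} (ht : t ≠ 0) :
    HasSum (fun j : ℕ => (z * t / 2) ^ (j + n) / ((j + n) ! : ℂ) * ((-(z / (2 * t))) ^ j / j !))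
      (besselJNat n z * t ^ n) := by
  refine ((hasSum_besselJNat n z).mul_right (t ^ n)).congr_fun fun j => ?_
  rw [neg_pow]
  simp only [div_pow, mul_pow]
  field_simp
  ring

theorem besselJ_generating_function (z t : ℂ) (ht : t ≠ 0) :
    HasSum (fun n : ℤ => besselJ n z * t ^ n)
      (Complex.exp ((z / 2) * (t - 1 / t))) := by
  have hexp : (z / 2) * (t - 1 / t) = z * t / 2 + -(z / (2 * t)) := by
    field_simp
    ring
  rw [hexp, Complex.exp_add]
  refine (subMinEquiv.symm.hasSum_iff.2 (Complex.hasSum_exp_mul_exp _ _)).prod_fiberwise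
    fun n => ?_
  obtain ⟨n, rfl | rfl⟩ := n.eq_nat_or_neg
  · simp only [Function.comp_apply, subMinEquiv_symm_natCast, besselJ_natCast, zpow_natCast]
    exact hasSum_besselJNat_mul_pow n z ht
  · have h := hasSum_besselJNat_mul_pow n z (neg_ne_zero.2 (inv_ne_zero ht))
    rw [show -(z / (2 * -t⁻¹)) = z * t / 2 by field_simp,
      show z * -t⁻¹ / 2 = -(z / (2 * t)) by ring] at h
    have hval : besselJ (-n : ℤ) z * t ^ (-n : ℤ) = besselJNat n z * (-t⁻¹) ^ n := by
      rw [besselJ_neg_natCast, zpow_neg, zpow_natCast, neg_pow t⁻¹, inv_pow]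
      ring
    simp only [Function.comp_apply, subMinEquiv_symm_neg_natCast, hval]
    exact h.congr_fun fun j => mul_comm _ _
end

section
/- For all nonnegative integers m and n, ∑_{k=0}^{m} 2^k · C(2m−k, m+n) = 4^m − ∑_{j=1}^{n} C(2m+1, m+j). -/
open Finset

private lemma key_step (m n : ℕ) :
    (∑ k ∈ Finset.range (m + 1), 2 ^ k * (Nat.choose (2 * m - k) (m + n) : ℤ)) =
      (∑ k ∈ Finset.range (m + 1), 2 ^ k * (Nat.choose (2 * m - k) (m + (n + 1)) : ℤ))
        + (Nat.choose (2 * m + 1) (m + n + 1) : ℤ) := by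
  have tele : ∑ k ∈ Finset.range (m + 1),
      ((2 : ℤ) ^ (k + 1) * (Nat.choose (2 * m + 1 - (k + 1)) (m + n + 1) : ℤ)
        - 2 ^ k * (Nat.choose (2 * m + 1 - k) (m + n + 1) : ℤ))
      = 2 ^ (m + 1) * (Nat.choose (2 * m + 1 - (m + 1)) (m + n + 1) : ℤ)
        - 2 ^ 0 * (Nat.choose (2 * m + 1 - 0) (m + n + 1) : ℤ) :=
    Finset.sum_range_sub (fun k => 2 ^ k * (Nat.choose (2 * m + 1 - k) (m + n + 1) : ℤ)) (m + 1)
  have hm : Nat.choose (2 * m + 1 - (m + 1)) (m + n + 1) = 0 := by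
    apply Nat.choose_eq_zero_of_lt; omega
  have hterm : ∀ k ∈ Finset.range (m + 1),
      (2 : ℤ) ^ (k + 1) * (Nat.choose (2 * m + 1 - (k + 1)) (m + n + 1) : ℤ)
        - 2 ^ k * (Nat.choose (2 * m + 1 - k) (m + n + 1) : ℤ)
      = 2 ^ k * (Nat.choose (2 * m - k) (m + (n + 1)) : ℤ)
        - 2 ^ k * (Nat.choose (2 * m - k) (m + n) : ℤ) := by
    intro k hk
    simp only [Finset.mem_range] at hk
    have h1 : 2 * m + 1 - (k + 1) = 2 * m - k := by omega
    have h2 : 2 * m + 1 - k = (2 * m - k) + 1 := by omega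
    have h3 : m + n + 1 = (m + n) + 1 := by omega
    rw [h1, h2, h3, Nat.choose_succ_succ (2 * m - k) (m + n)]
    push_cast
    have h4 : m + (n + 1) = m + n + 1 := by omega
    rw [h4]
    ring
  rw [Finset.sum_congr rfl hterm] at tele
  rw [Finset.sum_sub_distrib] at tele
  rw [hm] at tele
  have : (2 * m + 1 - 0) = 2 * m + 1 := by omega
  rw [this] at tele
  push_cast at tele
  linarith [tele]

private lemma cum (m : ℕ) : ∀ n : ℕ,
    (∑ k ∈ Finset.range (m + 1), 2 ^ k * (Nat.choose (2 * m - k) (m + 0) : ℤ)) =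
      (∑ k ∈ Finset.range (m + 1), 2 ^ k * (Nat.choose (2 * m - k) (m + n) : ℤ))
        + ∑ j ∈ Finset.Icc 1 n, (Nat.choose (2 * m + 1) (m + j) : ℤ) := by
  intro n
  induction n with
  | zero => simp
  | succ n ih =>
    rw [ih, key_step m n, Finset.sum_Icc_succ_top (by omega : 1 ≤ n + 1),
      show m + (n + 1) = m + n + 1 from by omega]
    ring

private lemma top_zero (m : ℕ) :
    (∑ k ∈ Finset.range (m + 1), 2 ^ k * (Nat.choose (2 * m - k) (m + (m + 1)) : ℤ)) = 0 := by
  apply Finset.sum_eq_zero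
  intro k hk
  simp only [Finset.mem_range] at hk
  have : Nat.choose (2 * m - k) (m + (m + 1)) = 0 := by
    apply Nat.choose_eq_zero_of_lt; omega
  rw [this]; simp

private lemma half_sum (m : ℕ) :
    (∑ j ∈ Finset.Icc 1 (m + 1), Nat.choose (2 * m + 1) (m + j)) = 4 ^ m := by
  have h1 : (∑ j ∈ Finset.Icc 1 (m + 1), Nat.choose (2 * m + 1) (m + j))
      = ∑ i ∈ Finset.range (m + 1), Nat.choose (2 * m + 1) (m + (1 + i)) := by
    rw [← Finset.Ico_add_one_right_eq_Icc, Finset.sum_Ico_eq_sum_range]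
    norm_num
  rw [h1]
  have h2 : ∑ i ∈ Finset.range (m + 1), Nat.choose (2 * m + 1) (m + (1 + (m - i)))
      = ∑ i ∈ Finset.range (m + 1), Nat.choose (2 * m + 1) (m + (1 + i)) := by
    have := Finset.sum_range_reflect (fun i => Nat.choose (2 * m + 1) (m + (1 + i))) (m + 1)
    simpa using this
  rw [← h2]
  have h3 : ∀ i ∈ Finset.range (m + 1),
      Nat.choose (2 * m + 1) (m + (1 + (m - i))) = Nat.choose (2 * m + 1) i := by
    intro i hi
    simp only [Finset.mem_range] at hi
    have he : m + (1 + (m - i)) = 2 * m + 1 - i := by omega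
    rw [he, Nat.choose_symm (by omega)]
  rw [Finset.sum_congr rfl h3]
  exact Nat.sum_range_choose_halfway m

theorem monthly_11274 (m n : ℕ) :
    (∑ k ∈ Finset.range (m + 1), 2 ^ k * (Nat.choose (2 * m - k) (m + n) : ℤ)) =
      4 ^ m - ∑ j ∈ Finset.Icc 1 n, (Nat.choose (2 * m + 1) (m + j) : ℤ) := by
  have base : (∑ k ∈ Finset.range (m + 1), 2 ^ k * (Nat.choose (2 * m - k) (m + 0) : ℤ))
      = 4 ^ m := by
    have h := cum m (m + 1)
    rw [top_zero m, zero_add] at h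
    rw [h, show (4:ℤ)^m = ((4^m : ℕ) : ℤ) by push_cast; ring, ← half_sum m]
    exact (Nat.cast_sum _ _).symm
  have h := cum m n
  rw [base] at h
  linarith
end

section
/- For all nonnegative integers p and q and every real number x, ∑_{ℓ=0}^{p} C(q+ℓ, q) x^ℓ = ∑_{k=0}^{p} C(p+q+1, q+k+1) (1−x)^k x^{p−k}. -/
theorem sum_choose_eq_sum_choose (p q : ℕ) (x : ℝ) :
    ∑ l ∈ Finset.range (p + 1), (Nat.choose (q + l) q : ℝ) * x ^ l =
      ∑ k ∈ Finset.range (p + 1),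
        (Nat.choose (p + q + 1) (q + k + 1) : ℝ) * (1 - x) ^ k * x ^ (p - k) := by
  induction p with
  | zero => simp
  | succ p ih =>
    have key : ∑ k ∈ Finset.range (p + 1 + 1),
        (Nat.choose (p + 1 + q + 1) (q + k + 1) : ℝ) * (1 - x) ^ k * x ^ (p + 1 - k)
        = ∑ k ∈ Finset.range (p + 1),
            (Nat.choose (p + q + 1) (q + k + 1) : ℝ) * (1 - x) ^ k * x ^ (p - k)
          + (Nat.choose (p + q + 1) q : ℝ) * x ^ (p + 1) := by
      have h1 : ∀ k : ℕ, ((p + 1 + q + 1).choose (q + k + 1) : ℝ)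
          = ((p + q + 1).choose (q + k) : ℝ) + ((p + q + 1).choose (q + k + 1) : ℝ) := by
        intro k
        have h : p + 1 + q + 1 = (p + q + 1) + 1 := by omega
        rw [h, Nat.choose_succ_succ]
        push_cast
        ring
      have split : ∑ k ∈ Finset.range (p + 1 + 1),
          (Nat.choose (p + 1 + q + 1) (q + k + 1) : ℝ) * (1 - x) ^ k * x ^ (p + 1 - k)
          = (∑ k ∈ Finset.range (p + 1 + 1),
              ((p + q + 1).choose (q + k) : ℝ) * (1 - x) ^ k * x ^ (p + 1 - k))
            + ∑ k ∈ Finset.range (p + 1 + 1),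
              ((p + q + 1).choose (q + k + 1) : ℝ) * (1 - x) ^ k * x ^ (p + 1 - k) := by
        rw [← Finset.sum_add_distrib]
        apply Finset.sum_congr rfl
        intro k _
        rw [h1 k]; ring
      rw [split]
      have hA : ∑ k ∈ Finset.range (p + 1 + 1),
          ((p + q + 1).choose (q + k + 1) : ℝ) * (1 - x) ^ k * x ^ (p + 1 - k)
          = x * ∑ k ∈ Finset.range (p + 1),
              ((p + q + 1).choose (q + k + 1) : ℝ) * (1 - x) ^ k * x ^ (p - k) := by
        rw [Finset.sum_range_succ]
        have hz : (p + q + 1).choose (q + (p + 1) + 1) = 0 :=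
          Nat.choose_eq_zero_of_lt (by omega)
        rw [hz]
        rw [Finset.mul_sum]
        simp only [Nat.cast_zero, zero_mul, add_zero]
        apply Finset.sum_congr rfl
        intro k hk
        have hk' : k < p + 1 := Finset.mem_range.mp hk
        have : p + 1 - k = (p - k) + 1 := by omega
        rw [this, pow_succ]
        ring
      have hB : ∑ k ∈ Finset.range (p + 1 + 1),
          ((p + q + 1).choose (q + k) : ℝ) * (1 - x) ^ k * x ^ (p + 1 - k)
          = (1 - x) * (∑ k ∈ Finset.range (p + 1),
              ((p + q + 1).choose (q + k + 1) : ℝ) * (1 - x) ^ k * x ^ (p - k))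
            + ((p + q + 1).choose q : ℝ) * x ^ (p + 1) := by
        rw [Finset.sum_range_succ']
        simp only [Nat.add_zero, pow_zero, Nat.sub_zero, mul_one]
        rw [Finset.mul_sum]
        congr 1
        · apply Finset.sum_congr rfl
          intro k hk
          have : p + 1 - (k + 1) = p - k := by omega
          rw [this, pow_succ]
          ring
      rw [hA, hB]
      ring
    rw [Finset.sum_range_succ, ih, key]
    have : q + (p + 1) = p + q + 1 := by omega
    rw [this]
end

section
/- For all nonnegative integers m and n with m ≥ n and every real number x, ∑_{k=0}^{m−n} C(2m−k, m+n) x^k = ∑_{k=0}^{m−n} C(2m+1, m+n+k+1) (x−1)^k. -/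
open Finset

lemma hockey_range (n c : ℕ) :
    ∑ k ∈ Finset.range (n + 1), Nat.choose k c = Nat.choose (n + 1) (c + 1) := by
  induction n with
  | zero =>
      cases c with
      | zero => simp
      | succ c => simp [Nat.choose_eq_zero_of_lt (show 1 < c + 1 + 1 by omega)]
  | succ n ih =>
      rw [Finset.sum_range_succ, ih, Nat.choose_succ_succ' (n + 1) c]
      omega

lemma key_conv (a : ℕ) : ∀ b c : ℕ,
    ∑ k ∈ Finset.range (a + 1), Nat.choose k c * Nat.choose (a - k) b =
      Nat.choose (a + 1) (b + c + 1) := by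
  induction a with
  | zero =>
      intro b c
      cases b <;> cases c <;> simp [Nat.choose]
  | succ a ih =>
      intro b c
      cases b with
      | zero =>
          simpa using hockey_range (a + 1) c
      | succ b =>
          rw [Finset.sum_range_succ]
          simp only [Nat.sub_self, Nat.choose_succ_succ 0 b, Nat.choose_zero_succ,
            Nat.choose_zero_right, mul_zero, add_zero, Nat.zero_add, mul_one]
          have h1 : ∀ k ∈ Finset.range (a + 1),
              Nat.choose k c * Nat.choose (a + 1 - k) (b + 1) =
                Nat.choose k c * Nat.choose (a - k) b +
                  Nat.choose k c * Nat.choose (a - k) (b + 1) := by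
            intro k hk
            have hk' : k ≤ a := by simpa [Nat.lt_succ_iff] using hk
            have h2 : a + 1 - k = (a - k) + 1 := by omega
            rw [h2, Nat.choose_succ_succ' (a - k) b, mul_add]
          rw [Finset.sum_congr rfl h1, Finset.sum_add_distrib, ih b c, ih (b + 1) c]
          have h3 : b + 1 + c + 1 = (b + c + 1) + 1 := by omega
          rw [h3, Nat.choose_succ_succ' (a + 1) (b + c + 1)]

theorem sum_choose_shift (m n : ℕ) (hmn : n ≤ m) (x : ℝ) :
    ∑ k ∈ Finset.range (m - n + 1), (Nat.choose (2 * m - k) (m + n) : ℝ) * x ^ k =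
      ∑ k ∈ Finset.range (m - n + 1),
        (Nat.choose (2 * m + 1) (m + n + k + 1) : ℝ) * (x - 1) ^ k := by
  have step1 : ∀ k ∈ Finset.range (m - n + 1),
      (Nat.choose (2 * m - k) (m + n) : ℝ) * x ^ k =
        ∑ j ∈ Finset.range (m - n + 1),
          (Nat.choose (2 * m - k) (m + n) : ℝ) * (Nat.choose k j : ℝ) * (x - 1) ^ j := by
    intro k hk
    have hk' : k ≤ m - n := by simpa [Nat.lt_succ_iff] using hk
    have hx : x ^ k = ∑ j ∈ Finset.range (k + 1),
        (x - 1) ^ j * 1 ^ (k - j) * (Nat.choose k j : ℝ) := by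
      rw [← add_pow]; norm_num
    have hpad := Finset.sum_subset (s₁ := Finset.range (k + 1))
      (s₂ := Finset.range (m - n + 1))
      (f := fun j => (Nat.choose (2 * m - k) (m + n) : ℝ) *
        ((x - 1) ^ j * 1 ^ (k - j) * (Nat.choose k j : ℝ)))
      (Finset.range_subset_range.2 (by omega))
      (by
        intro j hj hj'
        have : k < j := by
          simp only [Finset.mem_range, Nat.lt_succ_iff] at hj' ⊢
          omega
        simp [Nat.choose_eq_zero_of_lt this])
    rw [hx, Finset.mul_sum, hpad]
    exact Finset.sum_congr rfl fun j hj => by ring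
  rw [Finset.sum_congr rfl step1, Finset.sum_comm]
  refine Finset.sum_congr rfl fun j hj => ?_
  have hj' : j ≤ m - n := by simpa [Nat.lt_succ_iff] using hj
  have hnat : ∑ k ∈ Finset.range (m - n + 1),
      Nat.choose (2 * m - k) (m + n) * Nat.choose k j =
        Nat.choose (2 * m + 1) (m + n + j + 1) := by
    have hext : ∑ k ∈ Finset.range (2 * m + 1),
        Nat.choose k j * Nat.choose (2 * m - k) (m + n) =
          ∑ k ∈ Finset.range (m - n + 1),
            Nat.choose k j * Nat.choose (2 * m - k) (m + n) := by
      symm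
      apply Finset.sum_subset (Finset.range_subset_range.2 (by omega))
      intro k hk hk'
      have h1 : k ≤ 2 * m := by simpa [Nat.lt_succ_iff] using hk
      have h2 : m - n < k := by
        simp only [Finset.mem_range, Nat.lt_succ_iff] at hk'
        omega
      have h3 : 2 * m - k < m + n := by omega
      simp [Nat.choose_eq_zero_of_lt h3]
    have hkey := key_conv (2 * m) (m + n) j
    rw [hext] at hkey
    rw [← hkey]
    exact Finset.sum_congr rfl fun k _ => mul_comm _ _
  calc ∑ k ∈ Finset.range (m - n + 1),
        (Nat.choose (2 * m - k) (m + n) : ℝ) * (Nat.choose k j : ℝ) * (x - 1) ^ j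
      = (↑(∑ k ∈ Finset.range (m - n + 1),
          Nat.choose (2 * m - k) (m + n) * Nat.choose k j) : ℝ) * (x - 1) ^ j := by
        rw [Nat.cast_sum, Finset.sum_mul]
        push_cast
        ring
    _ = (Nat.choose (2 * m + 1) (m + n + j + 1) : ℝ) * (x - 1) ^ j := by rw [hnat]
end

section
/- For all nonnegative integers m and n with m ≥ n and every real number x, (x−1)^{n+1} · ∑_{k=0}^{m−n} C(2m−k, m+n) x^k = ∑_{j=1}^{m+1} C(2m+1, m+j) (x−1)^j − ∑_{j=1}^{n} C(2m+1, m+j) (x−1)^j. -/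
lemma key (N d : ℕ) (x : ℝ) :
    ∑ k ∈ Finset.range (d+1), (Nat.choose (N+d-k) N : ℝ) * x^k =
    (Nat.choose (N+d+1) (N+1) : ℝ) +
      (x-1) * ∑ k ∈ Finset.range d, (Nat.choose (N+d-k) (N+1) : ℝ) * x^k := by
  induction d with
  | zero => simp
  | succ d ih =>
    have h1 : ∑ k ∈ Finset.range (d+1+1), (Nat.choose (N+(d+1)-k) N : ℝ) * x^k
        = (Nat.choose (N+d+1) N : ℝ)
          + x * ∑ k ∈ Finset.range (d+1), (Nat.choose (N+d-k) N : ℝ) * x^k := by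
      rw [Finset.sum_range_succ', Finset.mul_sum]
      have : ∀ k, N + (d+1) - (k+1) = N + d - k := by omega
      simp only [this, pow_zero, Nat.sub_zero, mul_one]
      rw [add_comm]
      congr 1
      exact Finset.sum_congr rfl fun k _ => by ring
    have h2 : ∑ k ∈ Finset.range (d+1), (Nat.choose (N+(d+1)-k) (N+1) : ℝ) * x^k
        = (Nat.choose (N+d+1) (N+1) : ℝ)
          + x * ∑ k ∈ Finset.range d, (Nat.choose (N+d-k) (N+1) : ℝ) * x^k := by
      rw [Finset.sum_range_succ', Finset.mul_sum]
      have : ∀ k, N + (d+1) - (k+1) = N + d - k := by omega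
      simp only [this, pow_zero, Nat.sub_zero, mul_one]
      rw [add_comm]
      congr 1
      exact Finset.sum_congr rfl fun k _ => by ring
    have hp : (Nat.choose (N+(d+1)+1) (N+1) : ℝ)
        = (Nat.choose (N+d+1) N : ℝ) + (Nat.choose (N+d+1) (N+1) : ℝ) := by
      have := Nat.succ_sub_one (N+d+1)
      have h := Nat.choose_succ_succ (N+d+1) N
      push_cast [show N+(d+1)+1 = (N+d+1)+1 by ring, h]
      ring
    rw [h1, ih, h2, hp]
    ring

lemma aux (m d : ℕ) (hd : d ≤ m) (x : ℝ) :
    (x - 1) ^ (m - d + 1) *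
        ∑ k ∈ Finset.range (d + 1), (Nat.choose (2 * m - k) (m + (m - d)) : ℝ) * x ^ k =
      ∑ j ∈ Finset.Icc (m - d + 1) (m + 1), (Nat.choose (2 * m + 1) (m + j) : ℝ) * (x - 1) ^ j := by
  induction d with
  | zero =>
    simp only [Nat.sub_zero, Finset.sum_range_one, two_mul, pow_zero, mul_one,
      Nat.choose_self, Nat.cast_one, Finset.Icc_self, Finset.sum_singleton]
    rw [show m + (m+1) = m+m+1 by omega, Nat.choose_self]
    simp
  | succ d ih =>
    have hd' : d ≤ m := by omega
    have hN : ∀ k, 2 * m - k = (m + (m - (d+1))) + (d+1) - k := by omega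
    have hk := key (m + (m - (d+1))) (d+1) x
    have e1 : ∑ k ∈ Finset.range (d + 1 + 1), (Nat.choose (2 * m - k) (m + (m - (d+1))) : ℝ) * x ^ k
        = ((Nat.choose (2*m+1) (m + (m - (d+1)) + 1) : ℝ)
          + (x-1) * ∑ k ∈ Finset.range (d+1), (Nat.choose (2*m - k) (m + (m - (d+1)) + 1) : ℝ) * x ^ k) := by
      rw [show (2*m+1 : ℕ) = (m + (m - (d+1))) + (d+1) + 1 by omega]
      simp only [hN]
      exact hk
    rw [e1]
    have e2 : m + (m - (d+1)) + 1 = m + (m - d) := by omega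
    rw [e2]
    have e3 : (x - 1) ^ (m - (d+1) + 1) * ((x-1) * ∑ k ∈ Finset.range (d+1), (Nat.choose (2*m - k) (m + (m - d)) : ℝ) * x ^ k)
        = (x - 1) ^ (m - d + 1) * ∑ k ∈ Finset.range (d+1), (Nat.choose (2*m - k) (m + (m - d)) : ℝ) * x ^ k := by
      rw [show m - d + 1 = (m - (d+1) + 1) + 1 by omega]
      ring
    rw [mul_add, e3, ih hd']
    have hins : Finset.Icc (m - (d+1) + 1) (m + 1)
        = insert (m - (d+1) + 1) (Finset.Icc (m - d + 1) (m + 1)) := by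
      ext j
      simp only [Finset.mem_Icc, Finset.mem_insert]
      omega
    rw [hins, Finset.sum_insert (by simp; omega)]
    rw [show m + (m - (d+1) + 1) = m + (m - d) by omega]
    ring

theorem monthly_11274_polynomial (m n : ℕ) (hmn : n ≤ m) (x : ℝ) :
    (x - 1) ^ (n + 1) *
        ∑ k ∈ Finset.range (m - n + 1), (Nat.choose (2 * m - k) (m + n) : ℝ) * x ^ k =
      (∑ j ∈ Finset.Icc 1 (m + 1), (Nat.choose (2 * m + 1) (m + j) : ℝ) * (x - 1) ^ j) -
        ∑ j ∈ Finset.Icc 1 n, (Nat.choose (2 * m + 1) (m + j) : ℝ) * (x - 1) ^ j := by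
  have h := aux m (m - n) (Nat.sub_le m n) x
  rw [show m - (m - n) = n by omega] at h
  rw [h]
  have : ∑ j ∈ Finset.Icc 1 n, (Nat.choose (2 * m + 1) (m + j) : ℝ) * (x - 1) ^ j
      + ∑ j ∈ Finset.Icc (n+1) (m+1), (Nat.choose (2 * m + 1) (m + j) : ℝ) * (x - 1) ^ j
      = ∑ j ∈ Finset.Icc 1 (m + 1), (Nat.choose (2 * m + 1) (m + j) : ℝ) * (x - 1) ^ j := by
    rw [show Finset.Icc 1 n = Finset.Ioc 0 n from Finset.Icc_add_one_left_eq_Ioc 0 n,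
        show Finset.Icc (n+1) (m+1) = Finset.Ioc n (m+1) from Finset.Icc_add_one_left_eq_Ioc n (m+1),
        show Finset.Icc 1 (m+1) = Finset.Ioc 0 (m+1) from Finset.Icc_add_one_left_eq_Ioc 0 (m+1)]
    exact Finset.sum_Ioc_consecutive _ (Nat.zero_le n) (by omega)
  linarith [this]
end
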